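/- Let V : ℕ → 𝔽^n be periodic with period N, and let M(X) be a monic n×n matrix polynomial of degree m that annihilates V such that no nonzero n×n matrix polynomial of degree strictly less than m annihilates V (the matrix minimal polynomial of V). Then every root ζ of the scalar polynomial det M(X) in an algebraic closure of 𝔽 satisfies ζ^N = 1; consequently every irreducible factor of det M(X) in 𝔽[X] divides X^N − 1. -/

import Mathlib

open Polynomial Matrix

/-- A matrix polynomial `P(X) = ∑ P_i X^i` annihilates the vector sequence `V` if
`∑ i, P_i ⬝ V (i + j) = 0` for every shift `j ≥ 0`. -/
def Annihilates {𝔽 : Type*} [Field 𝔽] {n : ℕ}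
    (P : Polynomial (Matrix (Fin n) (Fin n) 𝔽)) (V : ℕ → Fin n → 𝔽) : Prop :=
  ∀ j : ℕ, ∑ i ∈ Finset.range (P.natDegree + 1), P.coeff i *ᵥ V (i + j) = 0

section Aux

variable {𝔽 : Type*} [Field 𝔽] {n : ℕ}

lemma ann_sum_eq (P : Polynomial (Matrix (Fin n) (Fin n) 𝔽)) (V : ℕ → Fin n → 𝔽)
    (j : ℕ) {K : ℕ} (hK : P.natDegree < K) :
    ∑ i ∈ Finset.range K, P.coeff i *ᵥ V (i + j)
      = ∑ i ∈ Finset.range (P.natDegree + 1), P.coeff i *ᵥ V (i + j) := by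
  refine (Finset.sum_subset (Finset.range_subset_range.2 hK) ?_).symm
  intro i _ hi
  rw [Finset.mem_range, not_lt] at hi
  rw [Polynomial.coeff_eq_zero_of_natDegree_lt (Nat.lt_of_succ_le hi), Matrix.zero_mulVec]

lemma ann_of_sum (P : Polynomial (Matrix (Fin n) (Fin n) 𝔽)) (V : ℕ → Fin n → 𝔽)
    {K : ℕ} (hK : P.natDegree < K)
    (h : ∀ j, ∑ i ∈ Finset.range K, P.coeff i *ᵥ V (i + j) = 0) :
    Annihilates P V := by
  intro j
  rw [← ann_sum_eq P V j hK]
  exact h j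

lemma ann_sub {P Q : Polynomial (Matrix (Fin n) (Fin n) 𝔽)} {V : ℕ → Fin n → 𝔽}
    (hP : Annihilates P V) (hQ : Annihilates Q V) : Annihilates (P - Q) V := by
  set K := max P.natDegree Q.natDegree + 1 with hKdef
  refine ann_of_sum _ _ (lt_of_le_of_lt (Polynomial.natDegree_sub_le P Q)
    (Nat.lt_succ_self _)) (fun j => ?_)
  have h1 : ∑ i ∈ Finset.range K, P.coeff i *ᵥ V (i + j) = 0 := by
    rw [ann_sum_eq P V j (Nat.lt_succ_of_le (le_max_left _ _))]; exact hP j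
  have h2 : ∑ i ∈ Finset.range K, Q.coeff i *ᵥ V (i + j) = 0 := by
    rw [ann_sum_eq Q V j (Nat.lt_succ_of_le (le_max_right _ _))]; exact hQ j
  calc ∑ i ∈ Finset.range K, (P - Q).coeff i *ᵥ V (i + j)
      = ∑ i ∈ Finset.range K, (P.coeff i *ᵥ V (i + j) - Q.coeff i *ᵥ V (i + j)) := by
        refine Finset.sum_congr rfl (fun i _ => ?_)
        rw [Polynomial.coeff_sub, Matrix.sub_mulVec]
    _ = 0 := by rw [Finset.sum_sub_distrib, h1, h2, sub_zero]

lemma ann_add {P Q : Polynomial (Matrix (Fin n) (Fin n) 𝔽)} {V : ℕ → Fin n → 𝔽}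
    (hP : Annihilates P V) (hQ : Annihilates Q V) : Annihilates (P + Q) V := by
  set K := max P.natDegree Q.natDegree + 1 with hKdef
  refine ann_of_sum _ _ (lt_of_le_of_lt (Polynomial.natDegree_add_le P Q)
    (Nat.lt_succ_self _)) (fun j => ?_)
  have h1 : ∑ i ∈ Finset.range K, P.coeff i *ᵥ V (i + j) = 0 := by
    rw [ann_sum_eq P V j (Nat.lt_succ_of_le (le_max_left _ _))]; exact hP j
  have h2 : ∑ i ∈ Finset.range K, Q.coeff i *ᵥ V (i + j) = 0 := by
    rw [ann_sum_eq Q V j (Nat.lt_succ_of_le (le_max_right _ _))]; exact hQ j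
  calc ∑ i ∈ Finset.range K, (P + Q).coeff i *ᵥ V (i + j)
      = ∑ i ∈ Finset.range K, (P.coeff i *ᵥ V (i + j) + Q.coeff i *ᵥ V (i + j)) := by
        refine Finset.sum_congr rfl (fun i _ => ?_)
        rw [Polynomial.coeff_add, Matrix.add_mulVec]
    _ = 0 := by rw [Finset.sum_add_distrib, h1, h2, add_zero]

lemma ann_zero (V : ℕ → Fin n → 𝔽) : Annihilates (0 : Polynomial (Matrix (Fin n) (Fin n) 𝔽)) V := by
  intro j; simp [Matrix.zero_mulVec]

lemma ann_monomial_mul {M : Polynomial (Matrix (Fin n) (Fin n) 𝔽)} {V : ℕ → Fin n → 𝔽}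
    (hM : Annihilates M V) (k : ℕ) (A : Matrix (Fin n) (Fin n) 𝔽) :
    Annihilates (Polynomial.monomial k A * M) V := by
  refine ann_of_sum _ _ (K := k + (M.natDegree + 1)) ?_ (fun j => ?_)
  · calc (Polynomial.monomial k A * M).natDegree ≤ (Polynomial.monomial k A).natDegree + M.natDegree :=
        Polynomial.natDegree_mul_le
      _ ≤ k + M.natDegree := by
        exact Nat.add_le_add_right (Polynomial.natDegree_monomial_le A) _
      _ < k + (M.natDegree + 1) := by omega
  · have hco : ∀ i, (Polynomial.monomial k A * M).coeff i *ᵥ V (i + j)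
        = if k ≤ i then A *ᵥ (M.coeff (i - k) *ᵥ V (i + j)) else 0 := by
      intro i
      by_cases hki : k ≤ i
      · obtain ⟨d, rfl⟩ := Nat.exists_eq_add_of_le hki
        rw [if_pos hki, Nat.add_sub_cancel_left, Nat.add_comm k d,
          Polynomial.coeff_monomial_mul, Matrix.mulVec_mulVec]
      · rw [if_neg hki]
        have : (Polynomial.monomial k A * M).coeff i = 0 := by
          rw [Polynomial.coeff_mul]
          refine Finset.sum_eq_zero (fun x hx => ?_)
          rw [Finset.HasAntidiagonal.mem_antidiagonal] at hx
          rw [Polynomial.coeff_monomial, if_neg (by omega), zero_mul]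
        rw [this, Matrix.zero_mulVec]
    calc ∑ i ∈ Finset.range (k + (M.natDegree + 1)), (Polynomial.monomial k A * M).coeff i *ᵥ V (i + j)
        = ∑ i ∈ Finset.Ico k (k + (M.natDegree + 1)),
            (Polynomial.monomial k A * M).coeff i *ᵥ V (i + j) := by
          rw [Finset.range_eq_Ico, ← Finset.sum_Ico_consecutive _ (Nat.zero_le k) (by omega)]
          rw [show (∑ i ∈ Finset.Ico 0 k, (Polynomial.monomial k A * M).coeff i *ᵥ V (i + j)) = 0
            from Finset.sum_eq_zero (fun i hi => by
              rw [Finset.mem_Ico] at hi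
              rw [hco i, if_neg (by omega)]), zero_add]
      _ = ∑ b ∈ Finset.range (M.natDegree + 1), A *ᵥ (M.coeff b *ᵥ V (b + (k + j))) := by
          rw [Finset.sum_Ico_eq_sum_range]
          simp only [Nat.add_sub_cancel_left]
          refine Finset.sum_congr rfl (fun b _ => ?_)
          rw [hco (k + b), if_pos (by omega), Nat.add_sub_cancel_left,
            show k + b + j = b + (k + j) by omega]
      _ = A *ᵥ (∑ b ∈ Finset.range (M.natDegree + 1), M.coeff b *ᵥ V (b + (k + j))) := by
          rw [← Matrix.mulVecLin_apply, map_sum]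
          simp [Matrix.mulVecLin_apply]
      _ = 0 := by rw [hM (k + j), Matrix.mulVec_zero]

lemma ann_mul {M : Polynomial (Matrix (Fin n) (Fin n) 𝔽)} {V : ℕ → Fin n → 𝔽}
    (hM : Annihilates M V) (Q : Polynomial (Matrix (Fin n) (Fin n) 𝔽)) :
    Annihilates (Q * M) V := by
  induction Q using Polynomial.induction_on' with
  | add p q hp hq => rw [add_mul]; exact ann_add hp hq
  | monomial k A => exact ann_monomial_mul hM k A

/-- Right division by a monic polynomial in a (noncommutative) polynomial ring. -/
lemma exists_right_div {R : Type*} [Ring R] {M : R[X]} (hM : M.Monic) (p : R[X]) :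
    ∃ q r : R[X], p = q * M + r ∧ (r = 0 ∨ r.natDegree < M.natDegree) := by
  by_cases hd : M.natDegree = 0
  · exact ⟨p, 0, by simp [hM.natDegree_eq_zero.mp hd], Or.inl rfl⟩
  have key : ∀ d : ℕ, ∀ p : R[X], p.natDegree ≤ d →
      ∃ q r : R[X], p = q * M + r ∧ (r = 0 ∨ r.natDegree < M.natDegree) := by
    intro d
    induction d using Nat.strong_induction_on with
    | _ d ih =>
      intro p hp
      by_cases h0 : p = 0
      · exact ⟨0, 0, by simp [h0], Or.inl rfl⟩
      by_cases hlt : p.natDegree < M.natDegree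
      · exact ⟨0, p, by simp, Or.inr hlt⟩
      push_neg at hlt
      set k := p.natDegree - M.natDegree with hk
      set a := p.leadingCoeff with ha
      set g := Polynomial.monomial k a * M with hg
      have hgd : g.natDegree ≤ p.natDegree := by
        calc g.natDegree ≤ (Polynomial.monomial k a).natDegree + M.natDegree :=
            Polynomial.natDegree_mul_le
          _ ≤ k + M.natDegree := Nat.add_le_add_right (Polynomial.natDegree_monomial_le a) _
          _ = p.natDegree := by omega
      have hgc : g.coeff p.natDegree = a := by
        rw [hg, show p.natDegree = M.natDegree + k by omega, Polynomial.coeff_monomial_mul,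
          hM.coeff_natDegree, mul_one]
      set p' := p - g with hp'
      have hp'c : p'.coeff p.natDegree = 0 := by
        rw [hp', Polynomial.coeff_sub, hgc, ha, Polynomial.leadingCoeff, sub_self]
      have hp'le : p'.natDegree ≤ p.natDegree :=
        (Polynomial.natDegree_sub_le p g).trans (max_le le_rfl hgd)
      by_cases h0' : p' = 0
      · refine ⟨Polynomial.monomial k a, 0, ?_, Or.inl rfl⟩
        have : p = g := by rw [← sub_eq_zero]; exact h0'
        rw [add_zero, ← hg, this]
      · have hlt' : p'.natDegree < p.natDegree := by
          rcases lt_or_eq_of_le hp'le with h | h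
          · exact h
          · exfalso
            apply h0'
            rw [← Polynomial.leadingCoeff_eq_zero, Polynomial.leadingCoeff, h, hp'c]
        obtain ⟨q, r, hqr, hr⟩ := ih p'.natDegree (lt_of_lt_of_le hlt' hp) p' le_rfl
        refine ⟨Polynomial.monomial k a + q, r, ?_, hr⟩
        rw [add_mul, ← hg]
        have : p = g + p' := by rw [hp']; abel
        rw [this, hqr]
        abel
  exact key p.natDegree p le_rfl

end Aux

/-- If `V` is periodic with period `N` and `M(X)` is its matrix minimal polynomial, then
every root `ζ` of the scalar polynomial `det M(X)` in an algebraic closure of `𝔽`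
satisfies `ζ^N = 1`; consequently every irreducible factor of `det M(X)` in `𝔽[X]`
divides `X^N - 1`.  Here `det M(X)` is the determinant of `M(X)` viewed (via
`matPolyEquiv`) as an `n × n` matrix with entries in `𝔽[X]`. -/
theorem matrixMinimalPoly_det_roots
    {𝔽 : Type*} [Field 𝔽] {n : ℕ}
    (V : ℕ → Fin n → 𝔽) (N : ℕ) (hN : 0 < N)
    (hper : ∀ k : ℕ, V (k + N) = V k)
    (M : Polynomial (Matrix (Fin n) (Fin n) 𝔽)) (m : ℕ)
    (hmonic : M.Monic)
    (hdeg : M.natDegree = m)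
    (hann : Annihilates M V)
    (hmin : ∀ P : Polynomial (Matrix (Fin n) (Fin n) 𝔽),
      P ≠ 0 → P.natDegree < m → ¬ Annihilates P V) :
    (∀ ζ : AlgebraicClosure 𝔽,
        Polynomial.aeval ζ (matPolyEquiv.symm M).det = 0 → ζ ^ N = 1) ∧
    (∀ p : Polynomial 𝔽, Irreducible p → p ∣ (matPolyEquiv.symm M).det →
        p ∣ X ^ N - 1) := by
  -- T := X^N - 1 annihilates V
  set T : Polynomial (Matrix (Fin n) (Fin n) 𝔽) := X ^ N - 1 with hT
  have hannT : Annihilates T V := by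
    refine ann_of_sum _ _ (K := N + 1) ?_ (fun j => ?_)
    · exact lt_of_le_of_lt (Polynomial.natDegree_sub_le _ _)
        (by simp [Polynomial.natDegree_X_pow_le, Nat.lt_succ_iff])
    · have : ∀ i, T.coeff i *ᵥ V (i + j)
          = (if i = N then V (i + j) else 0) - (if i = 0 then V (i + j) else 0) := by
        intro i
        rw [hT, Polynomial.coeff_sub, Polynomial.coeff_X_pow, Polynomial.coeff_one,
          Matrix.sub_mulVec]
        congr 1 <;> split <;> simp [Matrix.one_mulVec, Matrix.zero_mulVec]
      simp only [this]
      rw [Finset.sum_sub_distrib, Finset.sum_ite_eq' (Finset.range (N + 1)) N,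
        Finset.sum_ite_eq' (Finset.range (N + 1)) 0]
      simp only [Finset.mem_range, Nat.lt_succ_self, if_pos, Nat.zero_lt_succ, zero_add]
      rw [show N + j = j + N by omega, hper j, sub_self]
  -- divide T by M on the right
  obtain ⟨Q, R, hQR, hRd⟩ := exists_right_div hmonic T
  have hannR : Annihilates R V := by
    have : R = T - Q * M := by rw [hQR]; abel
    rw [this]
    exact ann_sub hannT (ann_mul hann Q)
  have hR0 : R = 0 := by
    rcases hRd with h | h
    · exact h
    · by_contra hne
      exact hmin R hne (hdeg ▸ h) hannR
  have hQM : T = Q * M := by rw [hQR, hR0, add_zero]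
  -- determinants
  have hsymm : (diagonal fun _ : Fin n => (X : Polynomial 𝔽)) ^ N - 1
      = matPolyEquiv.symm Q * matPolyEquiv.symm M := by
    have h := congrArg matPolyEquiv.symm hQM
    rw [hT] at h
    simp only [map_sub, map_pow, _root_.map_mul, _root_.map_one, matPolyEquiv_symm_X] at h
    exact h
  have hdet : ((X : Polynomial 𝔽) ^ N - 1) ^ n
      = (matPolyEquiv.symm Q).det * (matPolyEquiv.symm M).det := by
    have h := congrArg Matrix.det hsymm
    rw [Matrix.det_mul] at h
    rw [← h, Matrix.diagonal_pow, ← Matrix.diagonal_one, Matrix.diagonal_sub,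
      Matrix.det_diagonal]
    simp [Finset.prod_const]
  have hdvd : (matPolyEquiv.symm M).det ∣ ((X : Polynomial 𝔽) ^ N - 1) ^ n :=
    ⟨(matPolyEquiv.symm Q).det, by rw [hdet]; ring⟩
  constructor
  · intro ζ hζ
    obtain ⟨c, hc⟩ := hdvd
    have h2 : ((ζ : AlgebraicClosure 𝔽) ^ N - 1) ^ n = 0 := by
      have := congrArg (Polynomial.aeval ζ) hc
      simpa [hζ] using this
    rcases Nat.eq_zero_or_pos n with hn | hn
    · exfalso
      rw [hn, pow_zero] at h2
      exact one_ne_zero h2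
    · have := pow_eq_zero_iff hn.ne' |>.mp h2
      rwa [sub_eq_zero] at this
  · intro p hp hpd
    exact hp.prime.dvd_of_dvd_pow (hpd.trans hdvd)
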